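/- Let A be Hurwitz and P̂ the unique symmetric positive definite solution of AᵀP̂ + P̂A = −I. For any symmetric positive definite Q with solution P of AᵀP + PA = −Q, the ratio λ_max(P)/λ_min(Q) is at least λ_max(P̂); i.e., λ_max(P̂) ≤ λ_max(P)/λ_min(Q). -/

import Mathlib

/-!
Write `L X = Aᵀ X + X A`. For symmetric `X` and positive definite `B`, let `μ` be the least
generalized eigenvalue of the pencil `(X, B)`, so that `X - μ B` is positive semidefinite with a
kernel vector `v`. Since `v ⬝ᵥ L Y v = 2 (Y v) ⬝ᵥ A v` for symmetric `Y`, the quadratic form of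
`L (X - μ B)` vanishes at `v`. So if `-L B` is positive definite and `-L X` positive semidefinite,
then `μ < 0` is impossible (`-L (X - μ B) = -L X - μ (-L B)` would be positive definite), hence
`X ⪰ 0`: the Lyapunov operator is monotone. With `c = λ_min(Q)` we have `-L (P - c P̂) = Q - c I ⪰ 0`,
hence `c P̂ ⪯ P ⪯ λ_max(P) I` and `λ_max(P̂) ≤ λ_max(P) / c`.
-/

open Matrix
open scoped MatrixOrder

namespace Matrix

variable {ι : Type*} [Fintype ι]

def lyapunov (A : Matrix ι ι ℝ) : Matrix ι ι ℝ →ₗ[ℝ] Matrix ι ι ℝ :=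
  LinearMap.mulLeft ℝ Aᵀ + LinearMap.mulRight ℝ A

lemma lyapunov_apply (A X : Matrix ι ι ℝ) : lyapunov A X = Aᵀ * X + X * A := rfl

lemma dotProduct_lyapunov_mulVec_eq_zero {A X : Matrix ι ι ℝ} (hX : X.IsHermitian) {v : ι → ℝ}
    (hv : X *ᵥ v = 0) : v ⬝ᵥ (lyapunov A X *ᵥ v) = 0 := by
  have hvX : v ᵥ* X = 0 := by
    rw [← hX.eq, conjTranspose_eq_transpose_of_trivial, vecMul_transpose, hv]
  rw [lyapunov_apply, add_mulVec, ← mulVec_mulVec, ← mulVec_mulVec, hv, mulVec_zero,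
    dotProduct_add, dotProduct_mulVec v X, hvX]
  simp

lemma dotProduct_smul_mulVec_smul (M : Matrix ι ι ℝ) (c : ℝ) (w : ι → ℝ) :
    (c • w) ⬝ᵥ (M *ᵥ (c • w)) = c ^ 2 * (w ⬝ᵥ (M *ᵥ w)) := by
  simp only [mulVec_smul, dotProduct_smul, smul_dotProduct, smul_eq_mul]
  ring

lemma IsHermitian.exists_posSemidef_sub_smul_mulVec_eq_zero [Nonempty ι] {X B : Matrix ι ι ℝ}
    (hX : X.IsHermitian) (hB : B.PosDef) :
    ∃ μ : ℝ, ∃ v ≠ 0, (X - μ • B).PosSemidef ∧ (X - μ • B) *ᵥ v = 0 := by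
  set ratio : (ι → ℝ) → ℝ := fun v ↦ (v ⬝ᵥ (X *ᵥ v)) / (v ⬝ᵥ (B *ᵥ v))
  have hBpos : ∀ w : ι → ℝ, w ≠ 0 → 0 < w ⬝ᵥ (B *ᵥ w) := fun w hw ↦ by
    simpa using hB.dotProduct_mulVec_pos hw
  have hcont : ContinuousOn ratio (Metric.sphere 0 1) := by
    refine ContinuousOn.div (by fun_prop) (by fun_prop) fun w hw ↦ (hBpos w ?_).ne'
    exact ne_zero_of_mem_unit_sphere (⟨w, hw⟩ : Metric.sphere (0 : ι → ℝ) 1)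
  obtain ⟨v, hv, hmin⟩ := (isCompact_sphere (0 : ι → ℝ) 1).exists_isMinOn
    (NormedSpace.sphere_nonempty.2 zero_le_one) hcont
  have hv0 : v ≠ 0 := ne_zero_of_mem_unit_sphere ⟨v, hv⟩
  have hle : ∀ w, ratio v * (w ⬝ᵥ (B *ᵥ w)) ≤ w ⬝ᵥ (X *ᵥ w) := by
    intro w
    rcases eq_or_ne w 0 with rfl | hw
    · simp
    have hscale : ratio (‖w‖⁻¹ • w) = ratio w := by
      simp only [ratio, dotProduct_smul_mulVec_smul]
      exact mul_div_mul_left _ _ (by positivity)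
    have := hmin (show ‖w‖⁻¹ • w ∈ Metric.sphere 0 1 by
      simp [norm_smul, inv_mul_cancel₀ (norm_ne_zero_iff.2 hw)])
    rw [← le_div_iff₀ (hBpos w hw)]
    simpa [hscale] using this
  have hY : (X - ratio v • B).PosSemidef :=
    .of_dotProduct_mulVec_nonneg (hX.sub (hB.1.smul (.all _))) fun w ↦ by
      simpa [sub_mulVec, smul_mulVec] using hle w
  refine ⟨ratio v, v, hv0, hY, (hY.dotProduct_mulVec_zero_iff v).1 ?_⟩
  rw [star_trivial, sub_mulVec, smul_mulVec, dotProduct_sub, dotProduct_smul, smul_eq_mul,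
    div_mul_cancel₀ _ (hBpos v hv0).ne', sub_self]

theorem posSemidef_of_neg_lyapunov_posSemidef {A X B : Matrix ι ι ℝ} (hX : X.IsHermitian)
    (hB : B.PosDef) (hLB : (-lyapunov A B).PosDef) (hLX : (-lyapunov A X).PosSemidef) :
    X.PosSemidef := by
  cases isEmpty_or_nonempty ι
  · exact Subsingleton.elim X 0 ▸ .zero
  obtain ⟨μ, v, hv, hY, hYv⟩ := hX.exists_posSemidef_sub_smul_mulVec_eq_zero hB
  rcases le_or_gt 0 μ with hμ | hμ
  · simpa using hY.add (hB.posSemidef.smul hμ)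
  have hLY : (-lyapunov A (X - μ • B)).PosDef := by
    convert (hLB.smul (neg_pos.2 hμ)).add_posSemidef hLX using 1
    rw [map_sub, map_smul]
    module
  have := hLY.dotProduct_mulVec_pos hv
  rw [star_trivial, neg_mulVec, dotProduct_neg, dotProduct_lyapunov_mulVec_eq_zero hY.1 hYv,
    neg_zero] at this
  exact (lt_irrefl 0 this).elim

section Eigenvalues

variable {𝕜 : Type*} [RCLike 𝕜] [DecidableEq ι] [Nonempty ι] {M : Matrix ι ι 𝕜}

lemma IsHermitian.algebraMap_le_iff_le_inf'_eigenvalues (hM : M.IsHermitian) {r : ℝ} :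
    algebraMap ℝ _ r ≤ M ↔ r ≤ Finset.univ.inf' Finset.univ_nonempty hM.eigenvalues := by
  rw [algebraMap_le_iff_le_spectrum (ha := hM.isSelfAdjoint),
    hM.spectrum_real_eq_range_eigenvalues]
  simp

lemma IsHermitian.le_algebraMap_iff_sup'_eigenvalues_le (hM : M.IsHermitian) {r : ℝ} :
    M ≤ algebraMap ℝ _ r ↔ Finset.univ.sup' Finset.univ_nonempty hM.eigenvalues ≤ r := by
  rw [le_algebraMap_iff_spectrum_le (ha := hM.isSelfAdjoint),
    hM.spectrum_real_eq_range_eigenvalues]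
  simp

end Eigenvalues

end Matrix

theorem stmt_19_general {n : ℕ} [NeZero n] (A Phat P Q : Matrix (Fin n) (Fin n) ℝ)
    (hQ : Q.PosDef) (hPhat : Phat.PosDef) (hP : P.PosDef)
    (hLyapHat : Aᵀ * Phat + Phat * A = -(1 : Matrix (Fin n) (Fin n) ℝ))
    (hLyap : Aᵀ * P + P * A = -Q) :
    Finset.univ.sup' Finset.univ_nonempty hPhat.1.eigenvalues ≤
      (Finset.univ.sup' Finset.univ_nonempty hP.1.eigenvalues) /
        (Finset.univ.inf' Finset.univ_nonempty hQ.1.eigenvalues) := by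
  set c := Finset.univ.inf' Finset.univ_nonempty hQ.1.eigenvalues
  set lP := Finset.univ.sup' Finset.univ_nonempty hP.1.eigenvalues
  have hc : 0 < c := (Finset.lt_inf'_iff _).2 fun i _ ↦ hQ.eigenvalues_pos i
  have hQc : algebraMap ℝ _ c ≤ Q := hQ.1.algebraMap_le_iff_le_inf'_eigenvalues.2 le_rfl
  have hPc : c • Phat ≤ P := by
    refine posSemidef_of_neg_lyapunov_posSemidef (A := A) (hP.1.sub (hPhat.1.smul (.all c)))
      hPhat ?_ ?_
    · rw [lyapunov_apply, hLyapHat, neg_neg]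
      exact .one
    · have hL : -lyapunov A (P - c • Phat) = Q - algebraMap ℝ _ c := by
        rw [map_sub, map_smul, lyapunov_apply, lyapunov_apply, hLyapHat, hLyap,
          Algebra.algebraMap_eq_smul_one]
        module
      rw [hL]
      exact hQc
  have hPl : P ≤ algebraMap ℝ _ lP := hP.1.le_algebraMap_iff_sup'_eigenvalues_le.2 le_rfl
  rw [← hPhat.1.le_algebraMap_iff_sup'_eigenvalues_le]
  have := smul_le_smul_of_nonneg_left (hPc.trans hPl) (inv_nonneg.2 hc.le)
  rwa [inv_smul_smul₀ hc.ne', Algebra.smul_def, ← map_mul, inv_mul_eq_div] at this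

theorem stmt_19 {n : ℕ} [NeZero n] (A Phat P Q : Matrix (Fin n) (Fin n) ℝ)
    (hA : ∀ μ ∈ spectrum ℂ (A.map (Complex.ofReal)), μ.re < 0)
    (hQ : Q.PosDef) (hPhat : Phat.PosDef) (hP : P.PosDef)
    (hLyapHat : Aᵀ * Phat + Phat * A = -(1 : Matrix (Fin n) (Fin n) ℝ))
    (hLyap : Aᵀ * P + P * A = -Q) :
    Finset.univ.sup' Finset.univ_nonempty hPhat.1.eigenvalues ≤
      (Finset.univ.sup' Finset.univ_nonempty hP.1.eigenvalues) /
        (Finset.univ.inf' Finset.univ_nonempty hQ.1.eigenvalues) :=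
  stmt_19_general A Phat P Q hQ hPhat hP hLyapHat hLyap
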